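/- arXiv:2110.10650 — 2 statements merged into one kernel-verified Lean document; each statement's English description precedes it below -/
import Mathlib

section
/- (Revealed Attention.) Let X be a finite set of alternatives and let π be an AOM represented by (≻, μ) with μ satisfying attention overload. Then for every nonempty S ⊆ X and every a ∈ S: max over all R with S ⊆ R ⊆ X of π(a|R) ≤ φ_μ(a|S) ≤ min over all T with a ∈ T ⊆ S of π(U_⪰(a)|T). -/
open scoped Classical
open Finset

/-- A choice rule: probabilities are nonnegative on the choice problem, zero off it,
and sum to one over each nonempty choice problem. -/
def IsChoiceRule {α : Type*} [Fintype α] [DecidableEq α]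
    (π : α → Finset α → ℝ) : Prop :=
  ∀ S : Finset α, S.Nonempty →
    (∀ a ∈ S, 0 ≤ π a S) ∧ (∀ a : α, a ∉ S → π a S = 0) ∧ (∑ a ∈ S, π a S = 1)

/-- An attention rule: weights are nonnegative on nonempty subsets of the choice problem,
zero elsewhere, and sum to one over the nonempty subsets. -/
def IsAttentionRule {α : Type*} [Fintype α] [DecidableEq α]
    (μ : Finset α → Finset α → ℝ) : Prop :=
  ∀ S : Finset α, S.Nonempty →
    (∀ T : Finset α, T.Nonempty → T ⊆ S → 0 ≤ μ T S) ∧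
    (∀ T : Finset α, ¬(T.Nonempty ∧ T ⊆ S) → μ T S = 0) ∧
    (∑ T ∈ S.powerset.filter (fun T => T.Nonempty), μ T S = 1)

/-- Attention frequency of alternative `a` in choice problem `S` under attention rule `μ`. -/
noncomputable def attFreq {α : Type*} [Fintype α] [DecidableEq α]
    (μ : Finset α → Finset α → ℝ) (a : α) (S : Finset α) : ℝ :=
  ∑ T ∈ S.powerset.filter (fun T => a ∈ T), μ T S

/-- Attention overload: attention frequency weakly decreases as the choice problem expands. -/
def AttentionOverload {α : Type*} [Fintype α] [DecidableEq α]
    (μ : Finset α → Finset α → ℝ) : Prop :=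
  ∀ (a : α) (T S : Finset α), a ∈ T → T ⊆ S → attFreq μ a S ≤ attFreq μ a T

/-- `a` is the `r`-maximum of `T`. -/
def IsMaxOf {α : Type*} (r : α → α → Prop) (a : α) (T : Finset α) : Prop :=
  a ∈ T ∧ ∀ b ∈ T, b ≠ a → r a b

/-- The choice rule `π` is represented by the preference `r` and the attention rule `μ`. -/
noncomputable def Represents {α : Type*} [Fintype α] [DecidableEq α]
    (r : α → α → Prop) (μ : Finset α → Finset α → ℝ) (π : α → Finset α → ℝ) : Prop :=
  IsAttentionRule μ ∧
  ∀ S : Finset α, S.Nonempty → ∀ a ∈ S,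
    π a S = ∑ T ∈ S.powerset, (if IsMaxOf r a T then μ T S else 0)

/-- `π` is an Attention Overload Model. -/
noncomputable def IsAOM {α : Type*} [Fintype α] [DecidableEq α]
    (π : α → Finset α → ℝ) : Prop :=
  ∃ (r : α → α → Prop) (μ : Finset α → Finset α → ℝ),
    IsStrictTotalOrder α r ∧ AttentionOverload μ ∧ Represents r μ π

/-- `π(U_⪰(a) | T)`: probability of choosing from the weak upper contour set of `a` in `T`. -/
noncomputable def piUpper {α : Type*} [Fintype α] [DecidableEq α]
    (π : α → Finset α → ℝ) (r : α → α → Prop) (a : α) (T : Finset α) : ℝ :=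
  ∑ b ∈ T.filter (fun b => r b a ∨ b = a), π b T

/-- Attention Compensation (AC). -/
noncomputable def SatisfiesAC {α : Type*} [Fintype α] [DecidableEq α]
    (π : α → Finset α → ℝ) (r : α → α → Prop) : Prop :=
  ∀ (a : α) (T S : Finset α), a ∈ T → T ⊆ S → π a S ≤ piUpper π r a T

-- aux lemmas
lemma exists_isMaxOf {α : Type*} (r : α → α → Prop) (hr : IsStrictTotalOrder α r)
    (T : Finset α) (hT : T.Nonempty) : ∃ m, IsMaxOf r m T := by
  haveI := hr
  letI : LinearOrder α := linearOrderOfSTO r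
  exact ⟨T.min' hT, T.min'_mem hT, fun b hb hne =>
    lt_of_le_of_ne (T.min'_le b hb) (Ne.symm hne)⟩

lemma pi_le_attFreq {α : Type*} [Fintype α] [DecidableEq α]
    (π : α → Finset α → ℝ) (μ : Finset α → Finset α → ℝ) (r : α → α → Prop)
    (hrep : Represents r μ π) (R : Finset α) (hR : R.Nonempty) (a : α) (ha : a ∈ R) :
    π a R ≤ attFreq μ a R := by
  rw [hrep.2 R hR a ha, attFreq, Finset.sum_filter]
  apply Finset.sum_le_sum
  intro T hT
  simp only [Finset.mem_powerset] at hT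
  split_ifs with h1 h2 h2
  · exact le_refl _
  · exact absurd h1.1 h2
  · exact (hrep.1 R hR).1 T ⟨a, h2⟩ hT
  · exact le_refl _

lemma attFreq_le_piUpper {α : Type*} [Fintype α] [DecidableEq α]
    (π : α → Finset α → ℝ) (μ : Finset α → Finset α → ℝ) (r : α → α → Prop)
    (hr : IsStrictTotalOrder α r)
    (hrep : Represents r μ π) (T : Finset α) (a : α) (ha : a ∈ T) :
    attFreq μ a T ≤ piUpper π r a T := by
  have hT : T.Nonempty := ⟨a, ha⟩
  have hμ0 : ∀ T' ∈ T.powerset, ∀ b ∈ T.filter (fun b => r b a ∨ b = a),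
      0 ≤ (if IsMaxOf r b T' then μ T' T else 0) := by
    intro T' hT' b _
    split_ifs with h
    · exact (hrep.1 T hT).1 T' ⟨b, h.1⟩ (Finset.mem_powerset.mp hT')
    · exact le_refl _
  rw [piUpper]
  have hrw : ∀ b ∈ T.filter (fun b => r b a ∨ b = a),
      π b T = ∑ T' ∈ T.powerset, (if IsMaxOf r b T' then μ T' T else 0) := by
    intro b hb
    exact hrep.2 T hT b (Finset.mem_filter.mp hb).1
  rw [Finset.sum_congr rfl hrw, Finset.sum_comm]
  rw [attFreq, Finset.sum_filter]
  apply Finset.sum_le_sum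
  intro T' hT'
  have hT'sub : T' ⊆ T := Finset.mem_powerset.mp hT'
  split_ifs with haT'
  · -- a ∈ T', find max m of T'
    obtain ⟨m, hm⟩ := exists_isMaxOf r hr T' ⟨a, haT'⟩
    have hmfilt : m ∈ T.filter (fun b => r b a ∨ b = a) := by
      rw [Finset.mem_filter]
      refine ⟨hT'sub hm.1, ?_⟩
      by_cases hma : m = a
      · exact Or.inr hma
      · exact Or.inl (hm.2 a haT' (fun h => hma h.symm) |> fun h => h)
    calc μ T' T = (if IsMaxOf r m T' then μ T' T else 0) := by rw [if_pos hm]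
    _ ≤ ∑ b ∈ T.filter (fun b => r b a ∨ b = a), (if IsMaxOf r b T' then μ T' T else 0) :=
        Finset.single_le_sum (fun b hb => hμ0 T' hT' b hb) hmfilt
  · exact Finset.sum_nonneg (fun b hb => hμ0 T' hT' b hb)


/-- revealed attention bounds. -/
theorem revealed_attention_bounds {α : Type*} [Fintype α] [DecidableEq α]
    (π : α → Finset α → ℝ) (μ : Finset α → Finset α → ℝ) (r : α → α → Prop)
    (hπ : IsChoiceRule π) (hr : IsStrictTotalOrder α r)
    (hAO : AttentionOverload μ) (hrep : Represents r μ π) :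
    ∀ S : Finset α, S.Nonempty → ∀ a ∈ S,
      sSup ((fun R => π a R) '' {R : Finset α | S ⊆ R}) ≤ attFreq μ a S ∧
      attFreq μ a S ≤ sInf ((fun T => piUpper π r a T) '' {T : Finset α | a ∈ T ∧ T ⊆ S}) := by
  intro S hS a ha
  constructor
  · have hne : ((fun R => π a R) '' {R : Finset α | S ⊆ R}).Nonempty :=
      ⟨π a S, S, by simp, rfl⟩
    apply csSup_le hne
    rintro x ⟨R, hRS, rfl⟩
    simp only [Set.mem_setOf_eq] at hRS
    calc π a R ≤ attFreq μ a R :=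
          pi_le_attFreq π μ r hrep R (hS.mono hRS) a (hRS ha)
    _ ≤ attFreq μ a S := hAO a S R ha hRS
  · have hne : ((fun T => piUpper π r a T) '' {T : Finset α | a ∈ T ∧ T ⊆ S}).Nonempty :=
      ⟨piUpper π r a S, S, ⟨ha, Finset.Subset.refl S⟩, rfl⟩
    apply le_csInf hne
    rintro x ⟨T, ⟨haT, hTS⟩, rfl⟩
    calc attFreq μ a S ≤ attFreq μ a T := hAO a T S haT hTS
    _ ≤ piUpper π r a T := attFreq_le_piUpper π μ r hr hrep T a haT
end

section
/- (Characterization.) Let X be a finite set of alternatives, π a choice rule, and ≻ a preference ordering on X. Then there exists an attention rule μ satisfying attention overload such that (≻, μ) represents π if and only if (π, ≻) satisfies AC. -/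
open scoped Classical
open Finset

set_option linter.unusedSectionVars false

lemma key_ident (c h l : ℝ) :
    max (min c h - l) 0 + max (h - max c l) 0 = max (h - l) 0 := by
  rcases le_total c h with h1|h1 <;> rcases le_total c l with h2|h2 <;>
    rcases le_total l h with h3|h3 <;>
    simp [min_def, max_def] <;> split_ifs <;> linarith

noncomputable def hiF {α : Type*} (s : α → ℝ) (A : Finset α) : ℝ := A.fold min 1 s
noncomputable def loF {α : Type*} (s : α → ℝ) (A : Finset α) : ℝ := A.fold max 0 s
noncomputable def nuF {α : Type*} [DecidableEq α] (s : α → ℝ) (D A : Finset α) : ℝ :=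
  max (hiF s A - loF s (D \ A)) 0

lemma hiF_empty {α : Type*} (s : α → ℝ) : hiF s (∅ : Finset α) = 1 := rfl
lemma loF_empty {α : Type*} (s : α → ℝ) : loF s (∅ : Finset α) = 0 := rfl
lemma hiF_insert {α : Type*} [DecidableEq α] (s : α → ℝ) {c : α} {A : Finset α} (hc : c ∉ A) :
    hiF s (insert c A) = min (s c) (hiF s A) := Finset.fold_insert hc
lemma loF_insert {α : Type*} [DecidableEq α] (s : α → ℝ) {c : α} {A : Finset α} (hc : c ∉ A) :
    loF s (insert c A) = max (s c) (loF s A) := Finset.fold_insert hc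

lemma nuF_nonneg {α : Type*} [DecidableEq α] (s : α → ℝ) (D A : Finset α) : 0 ≤ nuF s D A :=
  le_max_right _ _

lemma tot_gen {α : Type*} [DecidableEq α] (s : α → ℝ) (t : ℝ) (ht0 : 0 ≤ t) (ht1 : t ≤ 1)
    (D : Finset α) :
    ∑ A ∈ D.powerset, max (min t (hiF s A) - loF s (D \ A)) 0 = t := by
  induction D using Finset.induction_on with
  | empty => simp [hiF_empty, loF_empty, min_eq_left ht1, max_eq_left ht0]
  | @insert c D hc ih =>
    rw [Finset.sum_powerset_insert hc]
    have e1 : ∀ A ∈ D.powerset,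
        max (min t (hiF s A) - loF s (insert c D \ A)) 0
        = max (min t (hiF s A) - max (s c) (loF s (D \ A))) 0 := by
      intro A hA
      rw [Finset.mem_powerset] at hA
      have : insert c D \ A = insert c (D \ A) := by
        rw [Finset.insert_sdiff_of_notMem]
        exact fun h => hc (hA h)
      rw [this, loF_insert s (fun h => hc (Finset.mem_sdiff.mp h).1)]
    have e2 : ∀ A ∈ D.powerset,
        max (min t (hiF s (insert c A)) - loF s (insert c D \ insert c A)) 0
        = max (min (s c) (min t (hiF s A)) - loF s (D \ A)) 0 := by
      intro A hA
      rw [Finset.mem_powerset] at hA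
      have hcA : c ∉ A := fun h => hc (hA h)
      have : insert c D \ insert c A = D \ A := by
        ext x; simp only [Finset.mem_sdiff, Finset.mem_insert]
        constructor
        · rintro ⟨hx | hx, hx2⟩
          · exact absurd (Or.inl hx) hx2
          · exact ⟨hx, fun h => hx2 (Or.inr h)⟩
        · rintro ⟨hx, hx2⟩
          exact ⟨Or.inr hx, fun h => h.elim (fun he => hc (he ▸ hx)) hx2⟩
      rw [this, hiF_insert s hcA, min_left_comm]
    rw [Finset.sum_congr rfl e1, Finset.sum_congr rfl e2, ← Finset.sum_add_distrib]
    rw [show (∑ A ∈ D.powerset, (max (min t (hiF s A) - max (s c) (loF s (D \ A))) 0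
        + max (min (s c) (min t (hiF s A)) - loF s (D \ A)) 0))
        = ∑ A ∈ D.powerset, max (min t (hiF s A) - loF s (D \ A)) 0 from
      Finset.sum_congr rfl fun A _ => by
        rw [add_comm]; exact key_ident (s c) (min t (hiF s A)) (loF s (D \ A))]
    exact ih

lemma hiF_le_one {α : Type*} [DecidableEq α] (s : α → ℝ) (A : Finset α) : hiF s A ≤ 1 := by
  induction A using Finset.induction_on with
  | empty => simp [hiF_empty]
  | @insert c A hc ih => rw [hiF_insert s hc]; exact le_trans (min_le_right _ _) ih

lemma tot_nuF {α : Type*} [DecidableEq α] (s : α → ℝ) (D : Finset α) :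
    ∑ A ∈ D.powerset, nuF s D A = 1 := by
  have := tot_gen s 1 zero_le_one le_rfl D
  rw [← this]
  exact Finset.sum_congr rfl fun A _ => by
    rw [nuF, min_eq_right (hiF_le_one s A)]

lemma marg_nuF {α : Type*} [DecidableEq α] (s : α → ℝ) {a : α} (h0 : 0 ≤ s a) (h1 : s a ≤ 1)
    (D : Finset α) (ha : a ∈ D) :
    ∑ A ∈ D.powerset.filter (fun A => a ∈ A), nuF s D A = s a := by
  induction D using Finset.induction_on with
  | empty => simp at ha
  | @insert c D hc ih =>
    rw [Finset.sum_filter, Finset.sum_powerset_insert hc]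
    by_cases hac : a = c
    · subst hac
      have haD : a ∉ D := hc
      have z1 : ∑ A ∈ D.powerset, (if a ∈ A then nuF s (insert a D) A else 0) = 0 := by
        apply Finset.sum_eq_zero
        intro A hA
        rw [Finset.mem_powerset] at hA
        rw [if_neg (fun h => haD (hA h))]
      rw [z1, zero_add]
      have : ∀ A ∈ D.powerset,
          (if a ∈ insert a A then nuF s (insert a D) (insert a A) else 0)
          = max (min (s a) (hiF s A) - loF s (D \ A)) 0 := by
        intro A hA
        rw [Finset.mem_powerset] at hA
        have hcA : a ∉ A := fun h => haD (hA h)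
        have hsd : insert a D \ insert a A = D \ A := by
          ext x; simp only [Finset.mem_sdiff, Finset.mem_insert]
          constructor
          · rintro ⟨hx | hx, hx2⟩
            · exact absurd (Or.inl hx) hx2
            · exact ⟨hx, fun h => hx2 (Or.inr h)⟩
          · rintro ⟨hx, hx2⟩
            exact ⟨Or.inr hx, fun h => h.elim (fun he => haD (he ▸ hx)) hx2⟩
        rw [if_pos (Finset.mem_insert_self a A), nuF, hsd, hiF_insert s hcA]
      rw [Finset.sum_congr rfl this]
      exact tot_gen s (s a) h0 h1 D
    · have haD : a ∈ D := by
        rcases Finset.mem_insert.mp ha with h | h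
        · exact absurd h hac
        · exact h
      have e1 : ∀ A ∈ D.powerset,
          (if a ∈ A then nuF s (insert c D) A else 0)
          = (if a ∈ A then max (hiF s A - max (s c) (loF s (D \ A))) 0 else 0) := by
        intro A hA
        rw [Finset.mem_powerset] at hA
        have : insert c D \ A = insert c (D \ A) := by
          rw [Finset.insert_sdiff_of_notMem]
          exact fun h => hc (hA h)
        rw [nuF, this, loF_insert s (fun h => hc (Finset.mem_sdiff.mp h).1)]
      have e2 : ∀ A ∈ D.powerset,
          (if a ∈ insert c A then nuF s (insert c D) (insert c A) else 0)
          = (if a ∈ A then max (min (s c) (hiF s A) - loF s (D \ A)) 0 else 0) := by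
        intro A hA
        rw [Finset.mem_powerset] at hA
        have hcA : c ∉ A := fun h => hc (hA h)
        have hmem : a ∈ insert c A ↔ a ∈ A := by
          simp [Finset.mem_insert, hac]
        have hsd : insert c D \ insert c A = D \ A := by
          ext x; simp only [Finset.mem_sdiff, Finset.mem_insert]
          constructor
          · rintro ⟨hx | hx, hx2⟩
            · exact absurd (Or.inl hx) hx2
            · exact ⟨hx, fun h => hx2 (Or.inr h)⟩
          · rintro ⟨hx, hx2⟩
            exact ⟨Or.inr hx, fun h => h.elim (fun he => hc (he ▸ hx)) hx2⟩
        rw [nuF, hsd, hiF_insert s hcA]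
        simp only [hmem]
      rw [Finset.sum_congr rfl e1, Finset.sum_congr rfl e2, ← Finset.sum_add_distrib]
      have e3 : ∀ A ∈ D.powerset,
          ((if a ∈ A then max (hiF s A - max (s c) (loF s (D \ A))) 0 else 0)
           + (if a ∈ A then max (min (s c) (hiF s A) - loF s (D \ A)) 0 else 0))
          = (if a ∈ A then nuF s D A else 0) := by
        intro A _
        by_cases h : a ∈ A
        · simp only [if_pos h]
          rw [add_comm, nuF]
          exact key_ident (s c) (hiF s A) (loF s (D \ A))
        · simp [h]
      rw [Finset.sum_congr rfl e3, ← Finset.sum_filter]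
      exact ih haD

section Aux
variable {α : Type*} [Fintype α] [DecidableEq α]

lemma isMaxOf_unique {r : α → α → Prop} (hr : IsStrictTotalOrder α r) {T : Finset α} {a b : α}
    (ha : IsMaxOf r a T) (hb : IsMaxOf r b T) : a = b := by
  by_contra hne
  have h1 := ha.2 b hb.1 (fun h => hne h.symm)
  have h2 := hb.2 a ha.1 hne
  exact hr.irrefl a (hr.trans a b a h1 h2)

lemma isMaxOf_exists {r : α → α → Prop} (hr : IsStrictTotalOrder α r) {T : Finset α}
    (hT : T.Nonempty) : ∃ b, IsMaxOf r b T := by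
  induction T using Finset.induction_on with
  | empty => exact absurd hT (by simp)
  | @insert c T hc ih =>
    rcases T.eq_empty_or_nonempty with h | h
    · subst h
      exact ⟨c, Finset.mem_insert_self c _, fun b hb hbc => absurd (Finset.mem_singleton.mp hb) hbc⟩
    · obtain ⟨b, hb⟩ := ih h
      rcases (if h1 : r c b then Or.inl h1 else if h2 : r b c then Or.inr (Or.inr h2) else Or.inr (Or.inl (hr.trichotomous c b h1 h2)) : r c b ∨ c = b ∨ r b c) with hcb | hcb | hcb
      · refine ⟨c, Finset.mem_insert_self c _, fun d hd hdc => ?_⟩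
        rcases Finset.mem_insert.mp hd with h' | h'
        · exact absurd h' hdc
        · by_cases hdb : d = b
          · exact hdb ▸ hcb
          · exact hr.trans c b d hcb (hb.2 d h' hdb)
      · exact absurd hb.1 (hcb ▸ hc)
      · refine ⟨b, Finset.mem_insert_of_mem hb.1, fun d hd hdb => ?_⟩
        rcases Finset.mem_insert.mp hd with h' | h'
        · exact h' ▸ hcb
        · exact hb.2 d h' hdb

end Aux

section Constr
variable {α : Type*} [Fintype α] [DecidableEq α]

/-- strict lower contour set of `b` within `S`. -/
noncomputable def belowSet (r : α → α → Prop) (b : α) (S : Finset α) : Finset α :=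
  S.filter (fun c => r b c)

/-- minimum of `piUpper π r a T` over `a ∈ T ⊆ S`. -/
noncomputable def mval (π : α → Finset α → ℝ) (r : α → α → Prop) (a : α) (S : Finset α) : ℝ :=
  if h : a ∈ S then
    (S.powerset.filter (fun T => a ∈ T)).inf'
      ⟨S, by simp [Finset.mem_filter, Finset.mem_powerset, h]⟩
      (fun T => piUpper π r a T)
  else 0

/-- strict upper contour set of `a` within `S`. -/
noncomputable def aboveSet (r : α → α → Prop) (a : α) (S : Finset α) : Finset α :=
  S.filter (fun b => r b a)

noncomputable def Rval (π : α → Finset α → ℝ) (r : α → α → Prop) (a : α) (S : Finset α) : ℝ :=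
  ∑ b ∈ aboveSet r a S, π b S

noncomputable def sval (π : α → Finset α → ℝ) (r : α → α → Prop) (a : α) (S : Finset α) : ℝ :=
  if Rval π r a S = 0 then 0 else (mval π r a S - π a S) / Rval π r a S

noncomputable def muAOM (π : α → Finset α → ℝ) (r : α → α → Prop) (T S : Finset α) : ℝ :=
  if T.Nonempty ∧ T ⊆ S then
    ∑ b ∈ T, (if IsMaxOf r b T then
      π b S * nuF (fun a => sval π r a S) (belowSet r b S) (T.erase b) else 0)
  else 0

lemma mval_le {π : α → Finset α → ℝ} {r : α → α → Prop} {a : α} {T S : Finset α}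
    (haT : a ∈ T) (hTS : T ⊆ S) : mval π r a S ≤ piUpper π r a T := by
  have haS : a ∈ S := hTS haT
  rw [mval, dif_pos haS]
  exact Finset.inf'_le _ (by simp [Finset.mem_filter, Finset.mem_powerset, haT, hTS])

lemma le_mval {π : α → Finset α → ℝ} {r : α → α → Prop} (hAC : SatisfiesAC π r)
    {a : α} {S : Finset α} (haS : a ∈ S) : π a S ≤ mval π r a S := by
  rw [mval, dif_pos haS]
  apply Finset.le_inf'
  intro T hT
  rw [Finset.mem_filter, Finset.mem_powerset] at hT
  exact hAC a T S hT.2 hT.1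

lemma mval_mono {π : α → Finset α → ℝ} {r : α → α → Prop} {a : α} {T S : Finset α}
    (haT : a ∈ T) (hTS : T ⊆ S) : mval π r a S ≤ mval π r a T := by
  conv_rhs => rw [mval, dif_pos haT]
  apply Finset.le_inf'
  intro T' hT'
  rw [Finset.mem_filter, Finset.mem_powerset] at hT'
  exact mval_le hT'.2 (hT'.1.trans hTS)

lemma piUpper_eq {π : α → Finset α → ℝ} {r : α → α → Prop} (hr : IsStrictTotalOrder α r)
    {a : α} {S : Finset α} (haS : a ∈ S) :
    piUpper π r a S = π a S + Rval π r a S := by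
  rw [piUpper, Rval, aboveSet]
  have : S.filter (fun b => r b a ∨ b = a) = insert a (S.filter (fun b => r b a)) := by
    ext x
    simp only [Finset.mem_filter, Finset.mem_insert]
    constructor
    · rintro ⟨hx, h | h⟩
      · exact Or.inr ⟨hx, h⟩
      · exact Or.inl h
    · rintro (h | ⟨hx, h⟩)
      · exact ⟨h ▸ haS, Or.inr h⟩
      · exact ⟨hx, Or.inl h⟩
  rw [this, Finset.sum_insert (by simp [hr.irrefl a])]

lemma Rval_nonneg {π : α → Finset α → ℝ} {r : α → α → Prop} (hπ : IsChoiceRule π)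
    {a : α} {S : Finset α} (haS : a ∈ S) : 0 ≤ Rval π r a S := by
  apply Finset.sum_nonneg
  intro b hb
  rw [aboveSet, Finset.mem_filter] at hb
  exact ((hπ S ⟨a, haS⟩).1) b hb.1

lemma sval_nonneg {π : α → Finset α → ℝ} {r : α → α → Prop} (hπ : IsChoiceRule π)
    (hAC : SatisfiesAC π r) {a : α} {S : Finset α} (haS : a ∈ S) :
    0 ≤ sval π r a S := by
  rw [sval]
  split_ifs with h
  · exact le_refl 0
  · apply div_nonneg
    · linarith [le_mval hAC haS]
    · exact Rval_nonneg hπ haS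

lemma sval_le_one {π : α → Finset α → ℝ} {r : α → α → Prop} (hr : IsStrictTotalOrder α r)
    (hπ : IsChoiceRule π) {a : α} {S : Finset α} (haS : a ∈ S) :
    sval π r a S ≤ 1 := by
  rw [sval]
  split_ifs with h
  · exact zero_le_one
  · rw [div_le_one (lt_of_le_of_ne (Rval_nonneg hπ haS) (Ne.symm h))]
    have := mval_le (π := π) (r := r) haS (le_refl S)
    rw [piUpper_eq hr haS] at this
    linarith

end Constr

section Constr2
variable {α : Type*} [Fintype α] [DecidableEq α]

lemma sum_maxsets {r : α → α → Prop} (hr : IsStrictTotalOrder α r) {b : α} {S : Finset α}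
    (hb : b ∈ S) (q : Finset α → Prop) [DecidablePred q] (f : Finset α → ℝ) :
    ∑ T ∈ S.powerset.filter (fun T => IsMaxOf r b T ∧ q T), f (T.erase b)
    = ∑ A ∈ (belowSet r b S).powerset.filter (fun A => q (insert b A)), f A := by
  have hbnb : b ∉ belowSet r b S := by simp [belowSet, hr.irrefl b]
  refine Finset.sum_bij' (fun T _ => T.erase b) (fun A _ => insert b A) ?hi ?hj ?li ?ri ?vals
  case hi =>
    intro T hT
    rw [Finset.mem_filter, Finset.mem_powerset] at hT
    obtain ⟨hTS, hmax, hq⟩ := hT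
    rw [Finset.mem_filter, Finset.mem_powerset]
    constructor
    · intro c hc
      rw [Finset.mem_erase] at hc
      rw [belowSet, Finset.mem_filter]
      exact ⟨hTS hc.2, hmax.2 c hc.2 hc.1⟩
    · rw [Finset.insert_erase hmax.1]; exact hq
  case hj =>
    intro A hA
    rw [Finset.mem_filter, Finset.mem_powerset] at hA
    obtain ⟨hAb, hq⟩ := hA
    rw [Finset.mem_filter, Finset.mem_powerset]
    refine ⟨?_, ⟨Finset.mem_insert_self b A, ?_⟩, hq⟩
    · intro c hc
      rcases Finset.mem_insert.mp hc with h | h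
      · exact h ▸ hb
      · exact (Finset.mem_filter.mp (hAb h)).1
    · intro c hc hcb
      rcases Finset.mem_insert.mp hc with h | h
      · exact absurd h hcb
      · exact (Finset.mem_filter.mp (hAb h)).2
  case li =>
    intro T hT
    rw [Finset.mem_filter, Finset.mem_powerset] at hT
    exact Finset.insert_erase hT.2.1.1
  case ri =>
    intro A hA
    rw [Finset.mem_filter, Finset.mem_powerset] at hA
    exact Finset.erase_insert (fun h => hbnb (hA.1 h))
  case vals =>
    intro T hT
    rfl

end Constr2

section Constr3
variable {α : Type*} [Fintype α] [DecidableEq α]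

lemma innerSumMax {r : α → α → Prop} (hr : IsStrictTotalOrder α r) {b : α} {S : Finset α}
    (hb : b ∈ S) (q : Finset α → Prop) [DecidablePred q] (hq : ∀ T, q T → T.Nonempty)
    (g : Finset α → ℝ) :
    ∑ T ∈ S.powerset.filter (fun T => q T),
        (if IsMaxOf r b T then g (T.erase b) else 0)
    = ∑ A ∈ (belowSet r b S).powerset.filter (fun A => q (insert b A)), g A := by
  rw [← Finset.sum_filter, Finset.filter_filter]
  rw [show (S.powerset.filter (fun T => q T ∧ IsMaxOf r b T))
      = S.powerset.filter (fun T => IsMaxOf r b T ∧ q T) from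
    Finset.filter_congr (fun T _ => by tauto)]
  exact sum_maxsets hr hb q g


lemma muAOM_nonneg {π : α → Finset α → ℝ} {r : α → α → Prop} (hπ : IsChoiceRule π)
    {T S : Finset α} (hT : T.Nonempty) (hTS : T ⊆ S) : 0 ≤ muAOM π r T S := by
  rw [muAOM, if_pos ⟨hT, hTS⟩]
  apply Finset.sum_nonneg
  intro b hb
  split_ifs with h
  · exact mul_nonneg ((hπ S ⟨b, hTS hb⟩).1 b (hTS hb)) (nuF_nonneg _ _ _)
  · exact le_refl 0

lemma muAOM_eq_of_max {π : α → Finset α → ℝ} {r : α → α → Prop} (hr : IsStrictTotalOrder α r)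
    {a : α} {T S : Finset α} (hTS : T ⊆ S) (hmax : IsMaxOf r a T) :
    muAOM π r T S = π a S * nuF (fun x => sval π r x S) (belowSet r a S) (T.erase a) := by
  rw [muAOM, if_pos ⟨⟨a, hmax.1⟩, hTS⟩]
  rw [Finset.sum_eq_single_of_mem a hmax.1]
  · rw [if_pos hmax]
  · intro c hc hca
    rw [if_neg]
    intro hmc
    exact hca (isMaxOf_unique hr hmc hmax)

lemma muAOM_expand {π : α → Finset α → ℝ} {r : α → α → Prop} {T S : Finset α}
    (hT : T.Nonempty) (hTS : T ⊆ S) :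
    muAOM π r T S = ∑ b ∈ S, (if IsMaxOf r b T then
      π b S * nuF (fun a => sval π r a S) (belowSet r b S) (T.erase b) else 0) := by
  rw [muAOM, if_pos ⟨hT, hTS⟩]
  apply Finset.sum_subset hTS
  intro b _ hbT
  rw [if_neg (fun hm => hbT hm.1)]

lemma muAOM_total {π : α → Finset α → ℝ} {r : α → α → Prop} (hr : IsStrictTotalOrder α r)
    (hπ : IsChoiceRule π) {S : Finset α} (hS : S.Nonempty) :
    ∑ T ∈ S.powerset.filter (fun T => T.Nonempty), muAOM π r T S = 1 := by
  have e1 : ∀ T ∈ S.powerset.filter (fun T => T.Nonempty),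
      muAOM π r T S = ∑ b ∈ S, (if IsMaxOf r b T then
        π b S * nuF (fun a => sval π r a S) (belowSet r b S) (T.erase b) else 0) := by
    intro T hT
    rw [Finset.mem_filter, Finset.mem_powerset] at hT
    exact muAOM_expand hT.2 hT.1
  rw [Finset.sum_congr rfl e1, Finset.sum_comm]
  have e2 : ∀ b ∈ S,
      (∑ T ∈ S.powerset.filter (fun T => T.Nonempty), (if IsMaxOf r b T then
        π b S * nuF (fun a => sval π r a S) (belowSet r b S) (T.erase b) else 0)) = π b S := by
    intro b hb
    refine Eq.trans (innerSumMax hr hb (fun T => T.Nonempty) (fun _ h => h)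
      (fun A => π b S * nuF (fun a => sval π r a S) (belowSet r b S) A)) ?_
    rw [show ((belowSet r b S).powerset.filter (fun A => (insert b A).Nonempty))
        = (belowSet r b S).powerset from
      Finset.filter_true_of_mem (fun A _ => Finset.insert_nonempty b A)]
    rw [← Finset.mul_sum, tot_nuF, mul_one]
  rw [Finset.sum_congr rfl e2]
  exact (hπ S hS).2.2

end Constr3

section Constr4
variable {α : Type*} [Fintype α] [DecidableEq α]

lemma attFreq_muAOM {π : α → Finset α → ℝ} {r : α → α → Prop} (hr : IsStrictTotalOrder α r)
    (hπ : IsChoiceRule π) (hAC : SatisfiesAC π r) {a : α} {S : Finset α} (haS : a ∈ S) :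
    attFreq (muAOM π r) a S = mval π r a S := by
  have hs0 : 0 ≤ sval π r a S := sval_nonneg hπ hAC haS
  have hs1 : sval π r a S ≤ 1 := sval_le_one hr hπ haS
  have e1 : ∀ T ∈ S.powerset.filter (fun T => a ∈ T),
      muAOM π r T S = ∑ b ∈ S, (if IsMaxOf r b T then
        π b S * nuF (fun x => sval π r x S) (belowSet r b S) (T.erase b) else 0) := by
    intro T hT
    rw [Finset.mem_filter, Finset.mem_powerset] at hT
    exact muAOM_expand ⟨a, hT.2⟩ hT.1
  rw [attFreq, Finset.sum_congr rfl e1, Finset.sum_comm]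
  have e2 : ∀ b ∈ S,
      (∑ T ∈ S.powerset.filter (fun T => a ∈ T), (if IsMaxOf r b T then
        π b S * nuF (fun x => sval π r x S) (belowSet r b S) (T.erase b) else 0))
      = (if b = a then π a S else
          (if r b a then π b S * sval π r a S else 0)) := by
    intro b hb
    refine Eq.trans (innerSumMax hr hb (fun T => a ∈ T) (fun _ h => ⟨a, h⟩)
      (fun A => π b S * nuF (fun x => sval π r x S) (belowSet r b S) A)) ?_
    by_cases hba : b = a
    · subst hba
      rw [if_pos rfl]
      rw [show ((belowSet r b S).powerset.filter (fun A => b ∈ insert b A))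
          = (belowSet r b S).powerset from
        Finset.filter_true_of_mem (fun A _ => Finset.mem_insert_self b A)]
      rw [← Finset.mul_sum, tot_nuF, mul_one]
    · rw [if_neg hba]
      have hmem : ∀ A : Finset α, a ∈ insert b A ↔ a ∈ A := by
        intro A
        rw [Finset.mem_insert]
        exact or_iff_right (fun h => hba h.symm)
      by_cases hra : r b a
      · rw [if_pos hra]
        have haD : a ∈ belowSet r b S := by rw [belowSet, Finset.mem_filter]; exact ⟨haS, hra⟩
        rw [show ((belowSet r b S).powerset.filter (fun A => a ∈ insert b A))
            = (belowSet r b S).powerset.filter (fun A => a ∈ A) from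
          Finset.filter_congr (fun A _ => by rw [hmem A])]
        rw [← Finset.mul_sum,
          marg_nuF (fun x => sval π r x S) hs0 hs1 (belowSet r b S) haD]
      · rw [if_neg hra]
        apply Finset.sum_eq_zero
        intro A hA
        rw [Finset.mem_filter, Finset.mem_powerset] at hA
        exfalso
        have : a ∈ A := (hmem A).mp hA.2
        have := hA.1 this
        rw [belowSet, Finset.mem_filter] at this
        exact hra this.2
  rw [Finset.sum_congr rfl e2]
  have e3 : ∑ b ∈ S, (if b = a then π a S else (if r b a then π b S * sval π r a S else 0))
      = π a S + sval π r a S * Rval π r a S := by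
    rw [← Finset.add_sum_erase S _ haS, if_pos rfl]
    congr 1
    have e4 : ∀ b ∈ S.erase a,
        (if b = a then π a S else (if r b a then π b S * sval π r a S else 0))
        = (if r b a then π b S * sval π r a S else 0) := by
      intro b hb
      rw [if_neg (Finset.mem_erase.mp hb).1]
    rw [Finset.sum_congr rfl e4, ← Finset.sum_filter]
    rw [show (S.erase a).filter (fun b => r b a) = aboveSet r a S from by
      ext x
      simp only [Finset.mem_filter, Finset.mem_erase, aboveSet]
      constructor
      · rintro ⟨⟨_, hx⟩, hx2⟩; exact ⟨hx, hx2⟩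
      · rintro ⟨hx, hx2⟩
        exact ⟨⟨fun h => hr.irrefl a (h ▸ hx2), hx⟩, hx2⟩]
    rw [Rval, Finset.mul_sum]
    apply Finset.sum_congr rfl
    intro b _
    ring
  rw [e3]
  by_cases hR : Rval π r a S = 0
  · rw [sval, if_pos hR, hR, mul_zero, add_zero]
    refine le_antisymm (le_mval hAC haS) ?_
    have := mval_le (π := π) (r := r) haS (le_refl S)
    rw [piUpper_eq hr haS, hR, add_zero] at this
    exact this
  · rw [sval, if_neg hR, div_mul_cancel₀ _ hR]
    ring

end Constr4

section Final
variable {α : Type*} [Fintype α] [DecidableEq α]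

lemma muAOM_rep_eq {π : α → Finset α → ℝ} {r : α → α → Prop} (hr : IsStrictTotalOrder α r)
    {a : α} {S : Finset α} (haS : a ∈ S) :
    ∑ T ∈ S.powerset, (if IsMaxOf r a T then muAOM π r T S else 0) = π a S := by
  rw [← Finset.sum_filter]
  have e1 : ∀ T ∈ S.powerset.filter (fun T => IsMaxOf r a T),
      muAOM π r T S = π a S * nuF (fun x => sval π r x S) (belowSet r a S) (T.erase a) := by
    intro T hT
    rw [Finset.mem_filter, Finset.mem_powerset] at hT
    exact muAOM_eq_of_max hr hT.1 hT.2
  rw [Finset.sum_congr rfl e1]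
  rw [show (S.powerset.filter (fun T => IsMaxOf r a T))
      = S.powerset.filter (fun T => IsMaxOf r a T ∧ (fun _ => True) T) from
    Finset.filter_congr (fun T _ => by tauto)]
  rw [sum_maxsets hr haS (fun _ => True)
    (fun A => π a S * nuF (fun x => sval π r x S) (belowSet r a S) A)]
  rw [Finset.filter_true_of_mem (fun _ _ => trivial), ← Finset.mul_sum, tot_nuF, mul_one]

lemma rep_le_attFreq {μ : Finset α → Finset α → ℝ} {r : α → α → Prop}
    (hA : IsAttentionRule μ) {a : α} {S : Finset α} (haS : a ∈ S) :
    ∑ T ∈ S.powerset, (if IsMaxOf r a T then μ T S else 0) ≤ attFreq μ a S := by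
  rw [← Finset.sum_filter, attFreq]
  apply Finset.sum_le_sum_of_subset_of_nonneg
  · intro T hT
    rw [Finset.mem_filter] at hT ⊢
    exact ⟨hT.1, hT.2.1⟩
  · intro T hT _
    rw [Finset.mem_filter, Finset.mem_powerset] at hT
    exact (hA S ⟨a, haS⟩).1 T ⟨a, hT.2⟩ hT.1

lemma attFreq_le_piUpper_s9 {π : α → Finset α → ℝ} {μ : Finset α → Finset α → ℝ}
    {r : α → α → Prop} (hr : IsStrictTotalOrder α r) (hA : IsAttentionRule μ)
    (hrep : ∀ S : Finset α, S.Nonempty → ∀ a ∈ S,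
      π a S = ∑ T ∈ S.powerset, (if IsMaxOf r a T then μ T S else 0))
    {a : α} {W : Finset α} (haW : a ∈ W) :
    attFreq μ a W ≤ piUpper π r a W := by
  have hW : W.Nonempty := ⟨a, haW⟩
  have e1 : piUpper π r a W = ∑ T ∈ W.powerset,
      (∑ b ∈ W.filter (fun b => r b a ∨ b = a), (if IsMaxOf r b T then μ T W else 0)) := by
    rw [piUpper, ← Finset.sum_comm]
    apply Finset.sum_congr rfl
    intro b hb
    rw [Finset.mem_filter] at hb
    exact hrep W hW b hb.1
  rw [e1, attFreq, Finset.sum_filter]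
  apply Finset.sum_le_sum
  intro T hT
  rw [Finset.mem_powerset] at hT
  have hnn : ∀ b ∈ W.filter (fun b => r b a ∨ b = a),
      0 ≤ (if IsMaxOf r b T then μ T W else 0) := by
    intro b _
    split_ifs with h
    · exact (hA W hW).1 T ⟨b, h.1⟩ hT
    · exact le_refl 0
  by_cases haT : a ∈ T
  · rw [if_pos haT]
    obtain ⟨b0, hb0⟩ := isMaxOf_exists hr ⟨a, haT⟩
    have hb0mem : b0 ∈ W.filter (fun b => r b a ∨ b = a) := by
      rw [Finset.mem_filter]
      refine ⟨hT hb0.1, ?_⟩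
      by_cases h : b0 = a
      · exact Or.inr h
      · exact Or.inl (hb0.2 a haT (fun he => h he.symm))
    calc μ T W = (if IsMaxOf r b0 T then μ T W else 0) := by rw [if_pos hb0]
      _ ≤ _ := Finset.single_le_sum hnn hb0mem
  · rw [if_neg haT]
    exact Finset.sum_nonneg hnn

end Final

/-- characterization — an AOM representation with `r` exists iff AC holds. -/
theorem AOM_representation_iff_AC {α : Type*} [Fintype α] [DecidableEq α]
    (π : α → Finset α → ℝ) (r : α → α → Prop)
    (hπ : IsChoiceRule π) (hr : IsStrictTotalOrder α r) :
    (∃ μ : Finset α → Finset α → ℝ, AttentionOverload μ ∧ Represents r μ π)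
    ↔ SatisfiesAC π r := by
  constructor
  · rintro ⟨μ, hov, hrep⟩
    have hA : IsAttentionRule μ := hrep.1
    have heq := hrep.2
    intro a T S haT hTS
    have haS : a ∈ S := hTS haT
    calc π a S = ∑ T' ∈ S.powerset, (if IsMaxOf r a T' then μ T' S else 0) :=
          heq S ⟨a, haS⟩ a haS
      _ ≤ attFreq μ a S := rep_le_attFreq hA haS
      _ ≤ attFreq μ a T := hov a T S haT hTS
      _ ≤ piUpper π r a T := attFreq_le_piUpper_s9 hr hA heq haT
  · intro hAC
    refine ⟨muAOM π r, ?_, ?_, ?_⟩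
    · intro a T S haT hTS
      rw [attFreq_muAOM hr hπ hAC (hTS haT), attFreq_muAOM hr hπ hAC haT]
      exact mval_mono haT hTS
    · intro S hS
      refine ⟨fun T hT hTS => muAOM_nonneg hπ hT hTS, fun T h => ?_, muAOM_total hr hπ hS⟩
      rw [muAOM, if_neg h]
    · intro S hS a haS
      exact (muAOM_rep_eq hr haS).symm
end
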